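/- arXiv:2106.13673 — 2 statements merged into one kernel-verified Lean document; each statement's English description precedes it below -/
import Mathlib

section
/- Let c > 0, λ ∈ (0,1), b₁ = b₂ = −c/2, b₃ = k·c with k > 4, and define clip(x,c) = x·min(1, c/|x|). If x∞ ∈ ℝ satisfies x∞ = (1/3)·Σᵢ clip(λ·x∞ + (1−λ)·bᵢ, c), then x∞ ≤ c, while the minimizer x⋆ = (k−1)c/3 of f(x) = Σᵢ (1/2)(x − bᵢ)² satisfies x⋆ > c; hence x∞ ≠ x⋆. -/
noncomputable def clipR (x c : ℝ) : ℝ := x * min 1 (c / |x|)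

lemma clipR_le (x c : ℝ) (hc : 0 < c) : clipR x c ≤ c := by
  unfold clipR
  rcases eq_or_ne x 0 with h | h
  · simp [h]; positivity
  · have hx : 0 < |x| := abs_pos.mpr h
    calc x * min 1 (c / |x|) ≤ |x * min 1 (c / |x|)| := le_abs_self _
      _ = |x| * min 1 (c / |x|) := by
          rw [abs_mul, abs_of_nonneg (show (0:ℝ) ≤ min 1 (c / |x|) from le_min zero_le_one (by positivity))]
      _ ≤ |x| * (c / |x|) := by
          exact mul_le_mul_of_nonneg_left (min_le_right _ _) hx.le
      _ = c := by field_simp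

theorem model_clipping_counterexample (c lam k xInf : ℝ)
    (hc : 0 < c) (hlam : lam ∈ Set.Ioo (0 : ℝ) 1) (hk : 4 < k)
    (hfix : xInf = (1 / 3) * (clipR (lam * xInf + (1 - lam) * (-c / 2)) c
      + clipR (lam * xInf + (1 - lam) * (-c / 2)) c
      + clipR (lam * xInf + (1 - lam) * (k * c)) c)) :
    xInf ≤ c ∧ (k - 1) * c / 3 > c ∧ xInf ≠ (k - 1) * c / 3 := by
  have h1 := clipR_le (lam * xInf + (1 - lam) * (-c / 2)) c hc
  have h2 := clipR_le (lam * xInf + (1 - lam) * (k * c)) c hc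
  have hle : xInf ≤ c := by rw [hfix]; linarith
  have hgt : (k - 1) * c / 3 > c := by nlinarith
  exact ⟨hle, hgt, by intro h; rw [h] at hle; linarith⟩
end

section
/- Let λ ∈ (0,1), c > 0, and g(x) = (1/3)·[2·clip(λx − (1−λ)c/2, c) + clip(λx + (1−λ)kc, c)] for k > 4, where clip(y,c) = y·min(1, c/|y|). Then the unique fixed point of g in the interval [0, c] is x∞ = λc/(3 − 2λ), and x∞ < c. -/
lemma clipR_id (x c : ℝ) (hc : 0 < c) (h : |x| ≤ c) : clipR x c = x := by
  rcases eq_or_ne x 0 with rfl | hx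
  · simp [clipR]
  · have hax : 0 < |x| := abs_pos.mpr hx
    have : (1 : ℝ) ≤ c / |x| := (one_le_div hax).mpr h
    simp [clipR, min_eq_left this]

lemma clipR_sat (x c : ℝ) (hc : 0 < c) (h : c ≤ x) : clipR x c = c := by
  have hx : 0 < x := lt_of_lt_of_le hc h
  have hax : |x| = x := abs_of_pos hx
  have h1 : c / |x| ≤ 1 := by rw [hax]; exact (div_le_one hx).mpr h
  rw [clipR, min_eq_right h1, hax, mul_div_cancel₀ _ hx.ne']

theorem model_clipped_fixed_point (lam c k : ℝ)
    (hlam : lam ∈ Set.Ioo (0 : ℝ) 1) (hc : 0 < c) (hk : 4 < k) :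
    let g : ℝ → ℝ := fun x =>
      (1 / 3) * (2 * clipR (lam * x - (1 - lam) * c / 2) c
        + clipR (lam * x + (1 - lam) * (k * c)) c)
    g (lam * c / (3 - 2 * lam)) = lam * c / (3 - 2 * lam) ∧
    (∀ x ∈ Set.Icc (0 : ℝ) c, g x = x → x = lam * c / (3 - 2 * lam)) ∧
    lam * c / (3 - 2 * lam) < c := by
  obtain ⟨hl0, hl1⟩ := hlam
  have hd : (0 : ℝ) < 3 - 2 * lam := by linarith
  set x₀ : ℝ := lam * c / (3 - 2 * lam) with hx₀
  have hx₀pos : 0 < x₀ := div_pos (mul_pos hl0 hc) hd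
  have hx₀lt : x₀ < c := by
    rw [hx₀, div_lt_iff₀ hd]
    nlinarith
  -- |y1| ≤ c for x ∈ [0, c]
  have hy1 : ∀ x : ℝ, 0 ≤ x → x ≤ c →
      clipR (lam * x - (1 - lam) * c / 2) c = lam * x - (1 - lam) * c / 2 := by
    intro x h0 h1
    apply clipR_id _ _ hc
    rw [abs_le]
    constructor <;> nlinarith
  -- y2 at x₀ is ≥ c
  have hy2sat : clipR (lam * x₀ + (1 - lam) * (k * c)) c = c := by
    apply clipR_sat _ _ hc
    have : lam * x₀ = lam * lam * c / (3 - 2 * lam) := by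
      rw [hx₀]; ring
    rw [this, ← sub_nonneg]
    have key : lam * lam * c / (3 - 2 * lam) + (1 - lam) * (k * c) - c
        = ((1 - lam) * (k * (3 - 2 * lam) - (3 + lam)) * c) / (3 - 2 * lam) := by
      rw [eq_div_iff hd.ne', sub_mul, add_mul, div_mul_cancel₀ _ hd.ne']
      ring
    rw [key]
    apply div_nonneg _ hd.le
    have h1 : 0 ≤ k * (3 - 2 * lam) - (3 + lam) := by nlinarith
    exact mul_nonneg (mul_nonneg (by linarith) h1) hc.le
  refine ⟨?_, ?_, hx₀lt⟩
  · show (1 / 3) * (2 * clipR (lam * x₀ - (1 - lam) * c / 2) c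
        + clipR (lam * x₀ + (1 - lam) * (k * c)) c) = x₀
    rw [hy1 x₀ hx₀pos.le hx₀lt.le, hy2sat, hx₀]
    field_simp
    ring
  · intro x hx hgx
    obtain ⟨h0, h1⟩ := hx
    simp only at hgx
    rw [hy1 x h0 h1] at hgx
    set y2 := lam * x + (1 - lam) * (k * c) with hy2def
    have hy2pos : 0 < y2 := by
      have : 0 < (1 - lam) * (k * c) :=
        mul_pos (by linarith) (mul_pos (by linarith) hc)
      nlinarith
    rcases le_or_gt c y2 with hcase | hcase
    · rw [clipR_sat _ _ hc hcase] at hgx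
      rw [hx₀, eq_div_iff hd.ne']
      nlinarith
    · rw [clipR_id _ _ hc (by rw [abs_of_pos hy2pos]; exact hcase.le)] at hgx
      -- then x = (k-1) c / 3 > c, contradiction
      exfalso
      have hxval : 3 * x = 3 * lam * x + (1 - lam) * (k - 1) * c := by
        rw [hy2def] at hgx; nlinarith
      nlinarith [mul_pos (sub_pos.mpr hl1) hc]
end
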